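/- Let {x,y} be a two-pair in a graph G, and let J = G(x,y → z) be the contraction of x and y into z. Then the clique number of G equals the clique number of J. -/

import Mathlib

open SimpleGraph

variable {V : Type*}

/-- A walk is chordless if every `G`-edge between vertices on the walk is an edge of the walk. -/
def SimpleGraph.Walk.Chordless {V : Type*} {G : SimpleGraph V} {x y : V} (p : G.Walk x y) : Prop :=
  ∀ u v, u ∈ p.support → v ∈ p.support → G.Adj u v → p.toSubgraph.Adj u v

/-- A two-pair: non-adjacent vertices such that every induced (chordless) path
between them has exactly two edges. -/
def SimpleGraph.IsTwoPair (G : SimpleGraph V) (x y : V) : Prop :=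
  x ≠ y ∧ ¬ G.Adj x y ∧ ∀ p : G.Walk x y, p.IsPath → p.Chordless → p.length = 2

/-- `G` has a hole: an induced (chordless) cycle of length at least 5. -/
def SimpleGraph.HasHole (G : SimpleGraph V) : Prop :=
  ∃ (x : V) (p : G.Walk x x), p.IsCycle ∧ 5 ≤ p.length ∧ p.Chordless

/-- Weakly chordal graphs: hole-free and antihole-free. -/
def SimpleGraph.WeaklyChordal (G : SimpleGraph V) : Prop :=
  ¬ G.HasHole ∧ ¬ (Gᶜ).HasHole

/-- The contraction `G(x,y → z)` of a pair of vertices; the vertex `x` of the subtype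
plays the role of the new vertex `z`, adjacent to exactly the vertices of `G - {x,y}`
adjacent to at least one of `x`, `y`. -/
def SimpleGraph.contractPair (G : SimpleGraph V) (x y : V) : SimpleGraph {v : V // v ≠ y} where
  Adj a b := a ≠ b ∧ (G.Adj a b ∨ (a.1 = x ∧ G.Adj y b.1) ∨ (b.1 = x ∧ G.Adj a.1 y))
  symm := by
    constructor
    rintro a b ⟨hab, h | ⟨h1, h2⟩ | ⟨h1, h2⟩⟩
    · exact ⟨hab.symm, Or.inl h.symm⟩
    · exact ⟨hab.symm, Or.inr (Or.inr ⟨h1, h2.symm⟩)⟩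
    · exact ⟨hab.symm, Or.inr (Or.inl ⟨h1, h2.symm⟩)⟩
  loopless := ⟨fun a => by rintro ⟨h, -⟩; exact h rfl⟩

/-- The square of a graph: join vertices at distance at most 2. -/
def SimpleGraph.square (G : SimpleGraph V) : SimpleGraph V where
  Adj a b := a ≠ b ∧ (G.Adj a b ∨ ∃ w, G.Adj a w ∧ G.Adj w b)
  symm := by
    constructor
    rintro a b ⟨hab, h | ⟨w, h1, h2⟩⟩
    · exact ⟨hab.symm, Or.inl h.symm⟩
    · exact ⟨hab.symm, Or.inr ⟨w, h2.symm, h1.symm⟩⟩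
  loopless := ⟨fun a => by rintro ⟨h, -⟩; exact h rfl⟩

/-- A graph is perfect if every induced subgraph has chromatic number equal to clique number. -/
def SimpleGraph.IsPerfect (G : SimpleGraph V) : Prop :=
  ∀ s : Set V, (G.induce s).chromaticNumber = ((G.induce s).cliqueNum : ℕ∞)

/-!
Since `x` and `y` are non-adjacent, the map identifying `y` with `x` is a homomorphism
`G →g G(x,y → z)`, and a homomorphism is injective on cliques, so `ω(G) ≤ ω(J)`.
Conversely, a clique of `J` avoiding `z` is a clique of `G`. A clique `{z} ∪ K` gives a clique
`K` of `G - {x, y}` each of whose vertices sees `x` or `y`. If some `a ∈ K` missed `x` and some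
`b ∈ K` missed `y`, then `x - b - a - y` would be an induced path of length three, which a
two-pair forbids; so `x` or `y` extends `K` to a clique of `G` of the same size.
-/

namespace SimpleGraph

variable {α β : Type*} {G : SimpleGraph α}

theorem cliqueNum_eq_of_forall_exists_isNClique_iff {H : SimpleGraph β}
    (h : ∀ n, (∃ s, G.IsNClique n s) ↔ ∃ t, H.IsNClique n t) :
    G.cliqueNum = H.cliqueNum := by
  simp only [cliqueNum, h]

theorem IsNClique.image_hom [DecidableEq β] {H : SimpleGraph β} {n : ℕ} {s : Finset α}
    (hs : G.IsNClique n s) (f : G →g H) : H.IsNClique n (s.image f) := by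
  have hinj : Set.InjOn f s := fun u hu v hv huv => by
    by_contra hne
    exact (f.map_adj (hs.isClique hu hv hne)).ne huv
  refine ⟨?_, by rw [Finset.card_image_of_injOn hinj, hs.card_eq]⟩
  rw [Finset.coe_image]
  rintro _ ⟨u, hu, rfl⟩ _ ⟨v, hv, rfl⟩ hne
  exact f.map_adj (hs.isClique hu hv fun h => hne (h ▸ rfl))

namespace IsTwoPair

variable {x y a b : α}

theorem adj_or_adj_of_adj_of_adj_of_adj (h : G.IsTwoPair x y) (hxb : G.Adj x b)
    (hba : G.Adj b a) (hay : G.Adj a y) : G.Adj x a ∨ G.Adj b y := by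
  obtain ⟨hxy, hnxy, hlen⟩ := h
  by_contra! ⟨hxa, hby⟩
  let p : G.Walk x y := .cons hxb (.cons hba (.cons hay .nil))
  have hxa' : x ≠ a := by rintro rfl; exact hnxy hay
  have hby' : b ≠ y := by rintro rfl; exact hnxy hxb
  have hpath : p.IsPath := by
    simp [p, Walk.isPath_def, hxb.ne, hxa', hxy, hba.ne, hby', hay.ne]
  have hchordless : p.Chordless := by
    intro u v hu hv huv
    simp only [p, Walk.support_cons, Walk.support_nil, List.mem_cons, List.not_mem_nil,
      or_false] at hu hv
    rcases hu with rfl | rfl | rfl | rfl <;> rcases hv with rfl | rfl | rfl | rfl <;>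
      simp_all [p, Walk.toSubgraph, G.adj_comm]
  simpa [p] using hlen p hpath hchordless

theorem forall_adj_or_forall_adj (h : G.IsTwoPair x y) {t : Set α} (ht : G.IsClique t)
    (hadj : ∀ w ∈ t, G.Adj x w ∨ G.Adj y w) :
    (∀ w ∈ t, G.Adj x w) ∨ ∀ w ∈ t, G.Adj y w := by
  by_contra! ⟨⟨a, ha, hxa⟩, b, hb, hyb⟩
  have hya : G.Adj y a := (hadj a ha).resolve_left hxa
  have hxb : G.Adj x b := (hadj b hb).resolve_right hyb
  have hba : G.Adj b a := ht hb ha (by rintro rfl; exact hxa hxb)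
  rcases h.adj_or_adj_of_adj_of_adj_of_adj hxb hba hya.symm with hxa' | hyb'
  exacts [hxa hxa', hyb hyb'.symm]

end IsTwoPair

section Contraction

variable {x y : α}

open Classical in
noncomputable def contractPairHom (hxy : x ≠ y) (hnadj : ¬ G.Adj x y) :
    G →g G.contractPair x y where
  toFun v := if hv : v = y then ⟨x, hxy⟩ else ⟨v, hv⟩
  map_rel' {u v} huv := by
    by_cases hu : u = y <;> by_cases hv : v = y
    · exact absurd (hu.trans hv.symm) huv.ne
    · subst hu
      have hvx : v ≠ x := by rintro rfl; exact hnadj huv.symm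
      simp [contractPair, hv, Ne.symm hvx, huv]
    · subst hv
      have hux : u ≠ x := by rintro rfl; exact hnadj huv
      simp [contractPair, hu, hux, huv]
    · simp [contractPair, hu, hv, huv, huv.ne]

theorem contractPair_adj_iff_of_ne {a b : {v // v ≠ y}} (ha : a.1 ≠ x) (hb : b.1 ≠ x) :
    (G.contractPair x y).Adj a b ↔ G.Adj a b := by
  simp only [contractPair, ha, hb, false_and, or_false]
  exact ⟨And.right, fun h => ⟨fun e => h.ne (congrArg Subtype.val e), h⟩⟩

theorem adj_or_adj_of_contractPair_adj (hxy : x ≠ y) {b : {v // v ≠ y}}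
    (h : (G.contractPair x y).Adj ⟨x, hxy⟩ b) : G.Adj x b ∨ G.Adj y b := by
  obtain ⟨hne, h | ⟨-, h⟩ | ⟨rfl, -⟩⟩ := h
  exacts [.inl h, .inr h, absurd rfl hne]

theorem IsNClique.of_contractPair_of_notMem {n : ℕ} {s : Finset {v // v ≠ y}} (hxy : x ≠ y)
    (hs : (G.contractPair x y).IsNClique n s) (hz : ⟨x, hxy⟩ ∉ s) :
    G.IsNClique n (s.map (Function.Embedding.subtype _)) := by
  refine ⟨?_, by rw [Finset.card_map, hs.card_eq]⟩
  rw [Finset.coe_map]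
  rintro _ ⟨a, ha, rfl⟩ _ ⟨b, hb, rfl⟩ hne
  have hax : a.1 ≠ x := fun e => hz ((Subtype.ext e : a = ⟨x, hxy⟩) ▸ ha)
  have hbx : b.1 ≠ x := fun e => hz ((Subtype.ext e : b = ⟨x, hxy⟩) ▸ hb)
  exact (contractPair_adj_iff_of_ne hax hbx).1 (hs.isClique ha hb fun e => hne (e ▸ rfl))

theorem IsTwoPair.exists_isNClique_of_contractPair (h : G.IsTwoPair x y) {n : ℕ}
    {s : Finset {v // v ≠ y}} (hs : (G.contractPair x y).IsNClique n s) :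
    ∃ t, G.IsNClique n t := by
  classical
  by_cases hz : ⟨x, h.1⟩ ∈ s
  swap
  · exact ⟨_, hs.of_contractPair_of_notMem h.1 hz⟩
  set t := (s.erase ⟨x, h.1⟩).map (Function.Embedding.subtype _)
  have ht : G.IsNClique (n - 1) t :=
    (hs.erase_of_mem hz).of_contractPair_of_notMem h.1 (s.notMem_erase _)
  have hadj : ∀ w ∈ (t : Set α), G.Adj x w ∨ G.Adj y w := by
    simp only [t, Finset.coe_map, Set.mem_image, Finset.mem_coe, Finset.mem_erase,
      Function.Embedding.coe_subtype]
    rintro _ ⟨b, ⟨hb, hbs⟩, rfl⟩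
    exact adj_or_adj_of_contractPair_adj h.1 (hs.isClique hz hbs (Ne.symm hb))
  have hn : n - 1 + 1 = n := Nat.sub_add_cancel (hs.card_eq ▸ Finset.card_pos.2 ⟨_, hz⟩)
  rcases h.forall_adj_or_forall_adj ht.isClique hadj with hx | hy
  exacts [⟨_, hn ▸ ht.insert hx⟩, ⟨_, hn ▸ ht.insert hy⟩]

end Contraction

end SimpleGraph

theorem cliqueNum_contractPair_general (G : SimpleGraph V) (x y : V)
    (h : G.IsTwoPair x y) :
    G.cliqueNum = (G.contractPair x y).cliqueNum := by
  classical
  exact cliqueNum_eq_of_forall_exists_isNClique_iff fun _ =>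
    ⟨fun ⟨_, hs⟩ => ⟨_, hs.image_hom (contractPairHom h.1 h.2.1)⟩,
      fun ⟨_, hs⟩ => h.exists_isNClique_of_contractPair hs⟩

/-- contracting a two-pair preserves the clique number. -/
theorem cliqueNum_contractPair [Fintype V] [DecidableEq V] (G : SimpleGraph V) (x y : V)
    (h : G.IsTwoPair x y) :
    G.cliqueNum = (G.contractPair x y).cliqueNum :=
  cliqueNum_contractPair_general G x y h
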